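/- Let T be a symmetric linear relation in a Krein space H with canonical decomposition H = H⁻[⊕]H⁺ such that H⁻ ⊆ D_T. Then {(x, P⁻y) : x ∈ H⁻, (x,y) ∈ T^c} = {(x, P⁻y) : x ∈ H⁻, (x,y) ∈ T}, and this set is the graph of an everywhere-defined bounded self-adjoint operator on the Hilbert space H⁻ (whose inner product, inherited from H, equals −[·,·] on H⁻). -/

import Mathlib

open Complex

noncomputable section

variable {H : Type*} [NormedAddCommGroup H] [InnerProductSpace ℂ H] [CompleteSpace H]

/-- Indefinite inner product `[x,y] = ⟪x, J y⟫`. -/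
def kip (J : H →L[ℂ] H) (x y : H) : ℂ := inner ℂ x (J y)

/-- `H⁻ = ker (J + id)`. -/
def negSet (J : H →L[ℂ] H) : Set H := {x | J x = -x}

/-- `H⁺ = ker (J - id)`. -/
def posSet (J : H →L[ℂ] H) : Set H := {x | J x = x}

/-- The canonical projection `P⁻ = (id - J)/2` onto `H⁻`. -/
def Pm (J : H →L[ℂ] H) (x : H) : H := (2⁻¹ : ℂ) • (x - J x)

/-- The canonical projection `P⁺ = (id + J)/2` onto `H⁺`. -/
def Pp (J : H →L[ℂ] H) (x : H) : H := (2⁻¹ : ℂ) • (x + J x)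

/-- `J` is a fundamental symmetry: self-adjoint and an involution. -/
structure IsFundSym (J : H →L[ℂ] H) : Prop where
  symm : ∀ x y : H, (inner ℂ (J x) y : ℂ) = inner ℂ x (J y)
  invol : ∀ x : H, J (J x) = x

def domSet (A : Set (H × H)) : Set H := {x | ∃ y, (x, y) ∈ A}
def ranSet (A : Set (H × H)) : Set H := {y | ∃ x, (x, y) ∈ A}
def mulSet (A : Set (H × H)) : Set H := {y | ((0 : H), y) ∈ A}
def kerl (A : Set (H × H)) (l : ℂ) : Set H := {x | (x, l • x) ∈ A}
def pointSpec (A : Set (H × H)) : Set ℂ := {l | ∃ x : H, x ≠ 0 ∧ (x, l • x) ∈ A}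
/-- The relation `A - l·I`. -/
def shiftRel (A : Set (H × H)) (l : ℂ) : Set (H × H) := {p | ∃ q ∈ A, p = (q.1, q.2 - l • q.1)}
def invRel (A : Set (H × H)) : Set (H × H) := {p | (p.2, p.1) ∈ A}
/-- Composition `A ∘ B` (apply `B` first). -/
def relComp (A B : Set (H × H)) : Set (H × H) := {p | ∃ y, (p.1, y) ∈ B ∧ (y, p.2) ∈ A}
def imageRel (A : Set (H × H)) (M : Set H) : Set H := {y | ∃ x ∈ M, (x, y) ∈ A}
def setSum (A B : Set H) : Set H := {z | ∃ a ∈ A, ∃ b ∈ B, z = a + b}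
/-- The relation `JT = {(x, Jy) : (x,y) ∈ T}`. -/
def JRel (J : H →L[ℂ] H) (A : Set (H × H)) : Set (H × H) := {p | ∃ q ∈ A, p = (q.1, J q.2)}
/-- Krein-space adjoint `T^c`. -/
def adjRel (J : H →L[ℂ] H) (T : Set (H × H)) : Set (H × H) :=
  {q | ∀ p ∈ T, kip J q.2 p.1 = kip J q.1 p.2}
def IsSymRel (J : H →L[ℂ] H) (T : Set (H × H)) : Prop := T ⊆ adjRel J T
def IsDissipative (J : H →L[ℂ] H) (T : Set (H × H)) : Prop := ∀ p ∈ T, 0 ≤ (kip J p.1 p.2).im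
/-- The operator part `T_s = {(x,y) ∈ T : y ⟂ Ind T}`. -/
def opPart (T : Set (H × H)) : Set (H × H) :=
  {p | p ∈ T ∧ ∀ z ∈ mulSet T, (inner ℂ p.2 z : ℂ) = 0}
/-- `‖T_s P⁻‖`: norm of `x ↦ T_s x` as an operator on `H⁻`. -/
def normTsPm (J : H →L[ℂ] H) (T : Set (H × H)) : ℝ :=
  sSup {r | ∃ p ∈ opPart T, p.1 ∈ negSet J ∧ ‖p.1‖ ≤ 1 ∧ r = ‖p.2‖}
/-- `‖P⁻ T_s P⁻‖`: norm of `x ↦ P⁻(T_s x)` as an operator on `H⁻`. -/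
def normPmTsPm (J : H →L[ℂ] H) (T : Set (H × H)) : ℝ :=
  sSup {r | ∃ p ∈ opPart T, p.1 ∈ negSet J ∧ ‖p.1‖ ≤ 1 ∧ r = ‖Pm J p.2‖}
/-- The region `Γ` determined by `m = ‖T_s P⁻‖`, `c = ‖P⁻T_s P⁻‖`. -/
def GammaSet (m c : ℝ) : Set ℂ :=
  {l | l.im ≠ 0 ∧ m < |l.im| ∧
    ‖(if 0 ≤ l.re then (1 : ℂ) else -1) + (c : ℂ) / l‖ < 2 / (1 + (m / |l.im|) ^ 2)}
/-- `C = (ℂ∖ℝ) ∖ Γ`. -/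
def CSet (m c : ℝ) : Set ℂ := {l : ℂ | l.im ≠ 0} \ GammaSet m c

/-! For `x ∈ H⁻` one has `⟪x, P⁻y⟫ = ⟪x, y⟫ = -[x, y]`. If `(0, w) ∈ T^c`, then `w` is
`[·,·]`-orthogonal to `D_T ⊇ H⁻`, so `P⁻w = 0`; since `T ⊆ T^c` this makes `P⁻y` independent of
the choice of `(x, y) ∈ T^c` over a given `x ∈ H⁻`, which gives both the equality of the two
compressions and a linear operator `A` on `H⁻`. Symmetry of `T` makes `A` symmetric, and a
symmetric everywhere-defined operator on a Hilbert space is bounded (Hellinger–Toeplitz). -/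

theorem Submodule.exists_linearMap_mem_iff {R M N : Type*} [Ring R] [AddCommGroup M]
    [Module R M] [AddCommGroup N] [Module R N] (G : Submodule R (M × N))
    (hdom : ∀ x, ∃ y, (x, y) ∈ G) (hsingle : ∀ y, ((0 : M), y) ∈ G → y = 0) :
    ∃ f : M →ₗ[R] N, ∀ x y, (x, y) ∈ G ↔ f x = y := by
  choose f hf using hdom
  have hf_eq : ∀ x y, (x, y) ∈ G → f x = y := fun x y h =>
    (sub_eq_zero.mp (hsingle _ (by simpa using G.sub_mem h (hf x)))).symm
  exact ⟨{ toFun := f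
           map_add' := fun x x' => hf_eq _ _ (G.add_mem (hf x) (hf x'))
           map_smul' := fun c x => hf_eq _ _ (G.smul_mem c (hf x)) },
    fun x y => ⟨hf_eq x y, fun h => h ▸ hf x⟩⟩

section Krein

variable {E : Type*} [NormedAddCommGroup E] [InnerProductSpace ℂ E] {J : E →L[ℂ] E}

abbrev negSubspace (J : E →L[ℂ] E) : Submodule ℂ E :=
  LinearMap.ker ((J + 1 : E →L[ℂ] E) : E →ₗ[ℂ] E)

theorem mem_negSubspace_iff {x : E} : x ∈ negSubspace J ↔ x ∈ negSet J := by
  simp [negSet, eq_neg_iff_add_eq_zero]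

theorem IsFundSym.Pm_mem_negSet (hJ : IsFundSym J) (y : E) : Pm J y ∈ negSet J := by
  simp only [negSet, Set.mem_ofPred_eq, Pm, map_smul, map_sub, hJ.invol, ← smul_neg, neg_sub]

theorem IsFundSym.inner_Pm_right (hJ : IsFundSym J) {x : E} (hx : x ∈ negSet J) (y : E) :
    inner ℂ x (Pm J y) = inner ℂ x y := by
  have hJy : inner ℂ x (J y) = -inner ℂ x y := by
    rw [← hJ.symm, show J x = -x from hx, inner_neg_left]
  rw [Pm, inner_smul_right, inner_sub_right, hJy, sub_neg_eq_add, ← two_mul, ← mul_assoc,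
    inv_mul_cancel₀ two_ne_zero, one_mul]

def IsFundSym.negProj (hJ : IsFundSym J) : E →ₗ[ℂ] negSubspace J :=
  LinearMap.codRestrict _ ((2⁻¹ : ℂ) • (LinearMap.id - (J : E →ₗ[ℂ] E)))
    fun y => mem_negSubspace_iff.mpr (hJ.Pm_mem_negSet y)

@[simp]
theorem IsFundSym.coe_negProj (hJ : IsFundSym J) (y : E) : (hJ.negProj y : E) = Pm J y := rfl

theorem sub_mem_adjRel {T : Set (E × E)} {p q : E × E} (hp : p ∈ adjRel J T)
    (hq : q ∈ adjRel J T) : p - q ∈ adjRel J T := fun r hr => by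
  have hpr : kip J p.2 r.1 = kip J p.1 r.2 := hp r hr
  have hqr : kip J q.2 r.1 = kip J q.1 r.2 := hq r hr
  simp only [kip, Prod.fst_sub, Prod.snd_sub, inner_sub_left] at hpr hqr ⊢
  rw [hpr, hqr]

theorem IsFundSym.Pm_eq_zero_of_zero_mem_adjRel (hJ : IsFundSym J) {T : Set (E × E)}
    (hdom : negSet J ⊆ domSet T) {w : E} (hw : ((0 : E), w) ∈ adjRel J T) : Pm J w = 0 := by
  have horth : ∀ x ∈ negSet J, inner ℂ x w = 0 := by
    intro x hx
    obtain ⟨z, hz⟩ := hdom hx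
    have h := hw (x, z) hz
    simp only [kip, show J x = -x from hx, inner_neg_right, inner_zero_left, neg_eq_zero] at h
    exact inner_eq_zero_symm.mp h
  have hPm := hJ.Pm_mem_negSet w
  rw [← inner_self_eq_zero (𝕜 := ℂ), hJ.inner_Pm_right hPm, horth _ hPm]

theorem IsFundSym.Pm_eq_of_mem_adjRel_of_mem (hJ : IsFundSym J) {T : Set (E × E)}
    (hTsym : IsSymRel J T) (hdom : negSet J ⊆ domSet T) {x y y' : E}
    (hy : (x, y) ∈ adjRel J T) (hy' : (x, y') ∈ T) : Pm J y = Pm J y' := by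
  have h0 := hJ.Pm_eq_zero_of_zero_mem_adjRel hdom
    (by simpa using sub_mem_adjRel hy (hTsym hy'))
  rwa [← hJ.coe_negProj, map_sub, Submodule.coe_sub, hJ.coe_negProj, hJ.coe_negProj,
    sub_eq_zero] at h0

theorem IsFundSym.setOf_Pm_adjRel_eq_setOf_Pm (hJ : IsFundSym J) {T : Set (E × E)}
    (hTsym : IsSymRel J T) (hdom : negSet J ⊆ domSet T) :
    {p : E × E | p.1 ∈ negSet J ∧ ∃ y, (p.1, y) ∈ adjRel J T ∧ p.2 = Pm J y}
      = {p : E × E | p.1 ∈ negSet J ∧ ∃ y, (p.1, y) ∈ T ∧ p.2 = Pm J y} := by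
  ext ⟨x, z⟩
  constructor
  · rintro ⟨hx, y, hy, rfl⟩
    obtain ⟨y', hy'⟩ := hdom hx
    exact ⟨hx, y', hy', hJ.Pm_eq_of_mem_adjRel_of_mem hTsym hdom hy hy'⟩
  · rintro ⟨hx, y, hy, rfl⟩
    exact ⟨hx, y, hTsym hy, rfl⟩

theorem IsFundSym.inner_Pm_left_eq_inner_Pm_right (hJ : IsFundSym J) {T : Set (E × E)}
    (hTsym : IsSymRel J T) {u v y z : E} (hu : u ∈ negSet J) (hv : v ∈ negSet J)
    (hy : (u, y) ∈ T) (hz : (v, z) ∈ T) : inner ℂ (Pm J y) v = inner ℂ u (Pm J z) := by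
  have h := hTsym hy (v, z) hz
  simp only [kip, show J v = -v from hv, ← hJ.symm, show J u = -u from hu, inner_neg_left,
    inner_neg_right, neg_inj] at h
  rw [← inner_conj_symm, hJ.inner_Pm_right hv, inner_conj_symm, hJ.inner_Pm_right hu, h]

def IsFundSym.negCompression (hJ : IsFundSym J) (T : Submodule ℂ (E × E)) :
    Submodule ℂ (negSubspace J × negSubspace J) :=
  (T.comap ((negSubspace J).subtype.prodMap LinearMap.id)).map (LinearMap.id.prodMap hJ.negProj)

theorem IsFundSym.mem_negCompression (hJ : IsFundSym J) {T : Submodule ℂ (E × E)}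
    {u v : negSubspace J} :
    (u, v) ∈ hJ.negCompression T ↔ ∃ y, ((u : E), y) ∈ T ∧ (v : E) = Pm J y := by
  simp only [negCompression, Submodule.mem_map, Submodule.mem_comap, Prod.exists,
    LinearMap.prodMap_apply, LinearMap.id_apply, Submodule.coe_subtype, Prod.mk.injEq]
  constructor
  · rintro ⟨u', y, hy, rfl, rfl⟩
    exact ⟨y, hy, hJ.coe_negProj y⟩
  · rintro ⟨y, hy, hv⟩
    exact ⟨u, y, hy, rfl, Subtype.ext (hv ▸ hJ.coe_negProj y)⟩

theorem IsFundSym.exists_isSymmetric_negCompression (hJ : IsFundSym J)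
    {T : Submodule ℂ (E × E)} (hTsym : IsSymRel J (T : Set (E × E)))
    (hdom : negSet J ⊆ domSet (T : Set (E × E))) :
    ∃ A : negSubspace J →ₗ[ℂ] negSubspace J,
      A.IsSymmetric ∧ ∀ u v, (u, v) ∈ hJ.negCompression T ↔ A u = v := by
  have hu_neg (u : negSubspace J) : (u : E) ∈ negSet J := mem_negSubspace_iff.mp u.2
  have hdom' (u : negSubspace J) : ∃ v, (u, v) ∈ hJ.negCompression T := by
    obtain ⟨y, hy⟩ := hdom (hu_neg u)
    exact ⟨hJ.negProj y, hJ.mem_negCompression.mpr ⟨y, hy, rfl⟩⟩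
  have hsingle (v : negSubspace J) (hv : (0, v) ∈ hJ.negCompression T) : v = 0 := by
    obtain ⟨y, hy, hv⟩ := hJ.mem_negCompression.mp hv
    exact Subtype.ext (hv.trans (hJ.Pm_eq_zero_of_zero_mem_adjRel hdom (hTsym hy)))
  obtain ⟨A, hA⟩ := (hJ.negCompression T).exists_linearMap_mem_iff hdom' hsingle
  refine ⟨A, fun u v => ?_, hA⟩
  obtain ⟨y, hy, hAu⟩ := hJ.mem_negCompression.mp ((hA u (A u)).mpr rfl)
  obtain ⟨z, hz, hAv⟩ := hJ.mem_negCompression.mp ((hA v (A v)).mpr rfl)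
  simp only [Submodule.coe_inner, hAu, hAv]
  exact hJ.inner_Pm_left_eq_inner_Pm_right hTsym (hu_neg u) (hu_neg v) hy hz

end Krein

/-- Lemma 2.4 a): `P⁻T^c|H⁻ = P⁻T|H⁻` and it is the graph of a bounded self-adjoint
everywhere-defined operator on the Hilbert space `H⁻ = ker(J + id)`. -/
theorem statement5 (J : H →L[ℂ] H) (hJ : IsFundSym J)
    (T : Submodule ℂ (H × H))
    (hTsym : IsSymRel J (T : Set (H × H)))
    (hdom : negSet J ⊆ domSet (T : Set (H × H))) :
    ({p : H × H | p.1 ∈ negSet J ∧ ∃ y, (p.1, y) ∈ adjRel J (T : Set (H × H)) ∧ p.2 = Pm J y}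
        = {p : H × H | p.1 ∈ negSet J ∧ ∃ y, (p.1, y) ∈ T ∧ p.2 = Pm J y}) ∧
    ∃ A : (LinearMap.ker (((J + 1 : H →L[ℂ] H) : H →ₗ[ℂ] H))) →L[ℂ] (LinearMap.ker (((J + 1 : H →L[ℂ] H) : H →ₗ[ℂ] H))),
      (∀ u v : LinearMap.ker (((J + 1 : H →L[ℂ] H) : H →ₗ[ℂ] H)),
        (inner ℂ ((A u : H)) ((v : H)) : ℂ) = inner ℂ ((u : H)) ((A v : H))) ∧
      {p : H × H | p.1 ∈ negSet J ∧ ∃ y, (p.1, y) ∈ T ∧ p.2 = Pm J y}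
        = {p : H × H | ∃ u : LinearMap.ker (((J + 1 : H →L[ℂ] H) : H →ₗ[ℂ] H)), p = ((u : H), ((A u : H)))} := by
  have : CompleteSpace (negSubspace J) := (J + 1).isClosed_ker.completeSpace_coe
  obtain ⟨A, hAsymm, hA⟩ := hJ.exists_isSymmetric_negCompression hTsym hdom
  refine ⟨hJ.setOf_Pm_adjRel_eq_setOf_Pm hTsym hdom, ⟨A, hAsymm.continuous⟩, hAsymm, ?_⟩
  ext ⟨x, z⟩
  constructor
  · rintro ⟨hx, y, hy, rfl⟩
    let u : negSubspace J := ⟨x, mem_negSubspace_iff.mpr hx⟩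
    have hAu := (hA u (hJ.negProj y)).mp (hJ.mem_negCompression.mpr ⟨y, hy, rfl⟩)
    exact ⟨u, Prod.ext rfl (congrArg Subtype.val hAu).symm⟩
  · rintro ⟨u, hxz⟩
    obtain ⟨y, hy, hAu⟩ := hJ.mem_negCompression.mp ((hA u (A u)).mpr rfl)
    simp only [Prod.mk.injEq] at hxz
    obtain ⟨rfl, rfl⟩ := hxz
    exact ⟨mem_negSubspace_iff.mp u.2, y, hy, hAu⟩
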